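/- arXiv:2207.04689 — 6 statements merged into one kernel-verified Lean document; each statement's English description precedes it below -/
import Mathlib

section
/- Let n ≥ 1 and 1 ≤ m ≤ n be integers. Let A and B be real symmetric n×n matrices such that the sum of the m smallest eigenvalues of A (listed with multiplicity) is nonnegative and B is positive semidefinite. Then the sum of the m smallest eigenvalues of A + B (listed with multiplicity) is nonnegative. -/
open Matrix
open Finset

/-- Resolution of identity for an orthonormal family of n vectors in ℝⁿ. -/
lemma ortho_dot {n : ℕ} (v : Fin n → Fin n → ℝ)
    (h : ∀ i j, v i ⬝ᵥ v j = if i = j then 1 else 0)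
    (x y : Fin n → ℝ) : ∑ j, (x ⬝ᵥ v j) * (y ⬝ᵥ v j) = x ⬝ᵥ y := by
  classical
  set V : Matrix (Fin n) (Fin n) ℝ := Matrix.of v with hV
  have hVV : V * Vᵀ = 1 := by
    ext i j
    simp [Matrix.mul_apply, Matrix.one_apply, hV, ← h i j, dotProduct]
  have hVV' : Vᵀ * V = 1 := mul_eq_one_comm.mp hVV
  have h1 : ∀ z : Fin n → ℝ, ∀ j, z ⬝ᵥ v j = (V *ᵥ z) j := by
    intro z j
    simp [Matrix.mulVec, hV, dotProduct, mul_comm]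
  calc ∑ j, (x ⬝ᵥ v j) * (y ⬝ᵥ v j) = (V *ᵥ x) ⬝ᵥ (V *ᵥ y) := by
        simp only [h1]; rfl
    _ = x ⬝ᵥ y := by
        rw [Matrix.dotProduct_mulVec, ← Matrix.mulVec_transpose,
          Matrix.mulVec_mulVec, hVV', Matrix.one_mulVec]

lemma sum_castLE {n m : ℕ} (hmn : m ≤ n) (f : Fin n → ℝ) :
    ∑ i : Fin m, f (Fin.castLE hmn i)
      = ∑ j : Fin n, if (j : ℕ) < m then f j else 0 := by
  classical
  rw [← Finset.sum_filter]
  apply Finset.sum_bij (fun (i : Fin m) _ => Fin.castLE hmn i)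
  · intro i _; simp [i.2]
  · intro a _ b _ hab
    exact Fin.ext (by simpa [Fin.castLE] using congrArg Fin.val hab)
  · intro j hj
    simp only [Finset.mem_filter] at hj
    exact ⟨⟨j, hj.2⟩, Finset.mem_univ _, rfl⟩
  · intro i _; rfl

/-- Let `A` and `B` be real symmetric `n × n` matrices, with
`B` positive semidefinite. Let `lam` be the increasing list (with multiplicity)
of eigenvalues of `A` and `mu` the increasing list of eigenvalues of `A + B`,
each witnessed by an orthonormal basis of eigenvectors. If the sum of the `m`
smallest eigenvalues of `A` is nonnegative, then so is the sum of the `m`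
smallest eigenvalues of `A + B`. -/
theorem sum_smallest_eigenvalues_add_posSemidef_nonneg
    (n m : ℕ) (hn : 1 ≤ n) (hm : 1 ≤ m) (hmn : m ≤ n)
    (A B : Matrix (Fin n) (Fin n) ℝ) (hA : A.IsSymm) (hB : B.IsSymm)
    (hBpsd : ∀ v : Fin n → ℝ, 0 ≤ B.mulVec v ⬝ᵥ v)
    (lam mu : Fin n → ℝ) (hlam : Monotone lam) (hmu : Monotone mu)
    (u w : Fin n → (Fin n → ℝ))
    (huo : ∀ i j, u i ⬝ᵥ u j = if i = j then 1 else 0)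
    (hwo : ∀ i j, w i ⬝ᵥ w j = if i = j then 1 else 0)
    (hAu : ∀ i, A.mulVec (u i) = lam i • u i)
    (hABw : ∀ i, (A + B).mulVec (w i) = mu i • w i)
    (hsum : 0 ≤ ∑ i : Fin m, lam (Fin.castLE hmn i)) :
    0 ≤ ∑ i : Fin m, mu (Fin.castLE hmn i) := by
  classical
  set c : Fin n → Fin n → ℝ := fun i j => w i ⬝ᵥ u j with hc
  -- ⟨A wᵢ, wᵢ⟩ = ∑ⱼ λⱼ cᵢⱼ²
  have hAw : ∀ i, (A *ᵥ w i) ⬝ᵥ w i = ∑ j, lam j * (c i j * c i j) := by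
    intro i
    rw [← ortho_dot u huo (A *ᵥ w i) (w i)]
    refine Finset.sum_congr rfl fun j _ => ?_
    have h1 : (A *ᵥ w i) ⬝ᵥ u j = lam j * c i j := by
      rw [dotProduct_comm, Matrix.dotProduct_mulVec, ← Matrix.mulVec_transpose,
        hA.eq, hAu, smul_dotProduct]
      rw [dotProduct_comm, smul_eq_mul]
    rw [h1]
    simp only [hc]
    ring
  -- μᵢ = ⟨(A+B) wᵢ, wᵢ⟩
  have hmuval : ∀ i, mu i = ((A + B) *ᵥ w i) ⬝ᵥ w i := by
    intro i
    rw [hABw, smul_dotProduct, hwo i i]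
    simp
  -- μᵢ ≥ ∑ⱼ λⱼ cᵢⱼ²
  have hmu_ge : ∀ i, ∑ j, lam j * (c i j * c i j) ≤ mu i := by
    intro i
    rw [hmuval i, Matrix.add_mulVec, add_dotProduct, ← hAw i]
    have := hBpsd (w i)
    linarith
  set s : Fin n → ℝ := fun j => ∑ i : Fin m, c (Fin.castLE hmn i) j * c (Fin.castLE hmn i) j with hs
  have hs_nonneg : ∀ j, 0 ≤ s j := fun j =>
    Finset.sum_nonneg fun i _ => mul_self_nonneg _
  have hs_le : ∀ j, s j ≤ 1 := by
    intro j
    have hall : ∑ i : Fin n, (u j ⬝ᵥ w i) * (u j ⬝ᵥ w i) = 1 := by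
      rw [ortho_dot w hwo, huo j j]; simp
    have hrw : ∀ i : Fin n, (u j ⬝ᵥ w i) * (u j ⬝ᵥ w i) = c i j * c i j := by
      intro i; rw [hc]; simp [dotProduct_comm]
    rw [← hall]
    have e1 : ∑ i : Fin m, c (Fin.castLE hmn i) j * c (Fin.castLE hmn i) j
        = ∑ i : Fin n, if (i : ℕ) < m then c i j * c i j else 0 := sum_castLE hmn (fun i => c i j * c i j)
    calc s j = ∑ i : Fin n, if (i : ℕ) < m then (u j ⬝ᵥ w i) * (u j ⬝ᵥ w i) else 0 := by
          rw [show s j = ∑ i : Fin m, c (Fin.castLE hmn i) j * c (Fin.castLE hmn i) j from rfl,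
            e1]
          exact Finset.sum_congr rfl fun i _ => by rw [hrw i]
      _ ≤ ∑ i : Fin n, (u j ⬝ᵥ w i) * (u j ⬝ᵥ w i) := by
          refine Finset.sum_le_sum fun i _ => ?_
          split
          · exact le_rfl
          · exact mul_self_nonneg _
  have hs_sum : ∑ j, s j = m := by
    rw [hs, Finset.sum_comm]
    have : ∀ i : Fin m, ∑ j, c (Fin.castLE hmn i) j * c (Fin.castLE hmn i) j = 1 := by
      intro i
      rw [hc]
      rw [ortho_dot u huo (w (Fin.castLE hmn i)) (w (Fin.castLE hmn i)),
        hwo (Fin.castLE hmn i) (Fin.castLE hmn i)]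
      simp
    simp [this]
  set t : Fin n → ℝ := fun j => if (j : ℕ) < m then (1 : ℝ) else 0 with ht
  have ht_sum : ∑ j, t j = m := by
    have e : ∑ i : Fin m, (1 : ℝ) = ∑ j : Fin n, if (j : ℕ) < m then (1 : ℝ) else 0 :=
      sum_castLE hmn (fun _ => (1 : ℝ))
    simp only [ht]
    rw [← e]
    simp
  have hlam_t : ∑ j, lam j * t j = ∑ i : Fin m, lam (Fin.castLE hmn i) := by
    have e : ∑ i : Fin m, lam (Fin.castLE hmn i)
        = ∑ j : Fin n, if (j : ℕ) < m then lam j else 0 := sum_castLE hmn lam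
    rw [e]
    refine Finset.sum_congr rfl fun j _ => ?_
    by_cases hj : (j : ℕ) < m <;> simp [ht, hj]
  -- the rearrangement bound
  set L : ℝ := lam ⟨m - 1, by omega⟩ with hL
  have key : ∑ j, lam j * t j ≤ ∑ j, lam j * s j := by
    have h0 : (0:ℝ) ≤ ∑ j, lam j * (s j - t j) := by
      have step : ∀ j : Fin n, L * (s j - t j) ≤ lam j * (s j - t j) := by
        intro j
        by_cases hj : (j : ℕ) < m
        · have htj : t j = 1 := by rw [ht]; simp [hj]
          have h1 : s j - t j ≤ 0 := by rw [htj]; linarith [hs_le j]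
          have h2 : lam j ≤ L := hlam (by rw [Fin.le_def]; simp; omega)
          exact mul_le_mul_of_nonpos_right h2 h1
        · have htj : t j = 0 := by rw [ht]; simp [hj]
          have h1 : 0 ≤ s j - t j := by rw [htj]; linarith [hs_nonneg j]
          have h2 : L ≤ lam j := hlam (by rw [Fin.le_def]; simp; omega)
          exact mul_le_mul_of_nonneg_right h2 h1
      calc (0:ℝ) = L * (∑ j, s j - ∑ j, t j) := by rw [hs_sum, ht_sum]; ring
        _ = ∑ j, L * (s j - t j) := by
            rw [← Finset.mul_sum, Finset.sum_sub_distrib]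
        _ ≤ ∑ j, lam j * (s j - t j) := Finset.sum_le_sum fun j _ => step j
    have : ∑ j, lam j * (s j - t j) = ∑ j, lam j * s j - ∑ j, lam j * t j := by
      rw [← Finset.sum_sub_distrib]
      exact Finset.sum_congr rfl fun j _ => by ring
    linarith [this ▸ h0]
  have main : ∑ j, lam j * s j ≤ ∑ i : Fin m, mu (Fin.castLE hmn i) := by
    have : ∑ j, lam j * s j = ∑ i : Fin m, ∑ j, lam j * (c (Fin.castLE hmn i) j * c (Fin.castLE hmn i) j) := by
      rw [Finset.sum_comm]
      refine Finset.sum_congr rfl fun j _ => ?_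
      rw [hs, Finset.mul_sum]
    rw [this]
    exact Finset.sum_le_sum fun i _ => hmu_ge _
  linarith [hlam_t ▸ key, main, hsum]
end

section
/- Let n ≥ 2 and 1 ≤ m ≤ n−1 be integers, V ⊆ ℝⁿ an open set, and δ : V → ℝ a C² function with ‖∇δ(x)‖ = 1 for all x ∈ V. Let K ≥ 0 and assume that for every x ∈ V: (i) for every m-dimensional linear subspace Λ contained in the hyperplane (∇δ(x))^⊥ = {v ∈ ℝⁿ : ∇δ(x)·v = 0}, one has tr_Λ Hess δ(x) ≥ 0; and (ii) for every finite orthonormal family v₁, …, vₖ of vectors in (∇δ(x))^⊥, one has Σᵢ Hess δ(x)(vᵢ, vᵢ) ≥ −K. Let h : ℝ → ℝ be a C² function such that h′(t) ≥ 0 and h″(t) ≥ K·h′(t) for every t in the image δ(V). Then h ∘ δ is m-plurisubharmonic on V, i.e., tr_Λ Hess(h∘δ)(x) ≥ 0 for every x ∈ V and every m-dimensional linear subspace Λ ⊆ ℝⁿ. -/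
/-!
At `x ∈ V` put `g = ∇δ(x)` and `D = Hess δ(x)`. Differentiating `‖∇δ‖² ≡ 1` gives `D(g, ·) = 0`,
so for an orthonormal `v₁, …, vₘ` with `cᵢ = ⟪g, vᵢ⟫` we have
`∑ Hess(h ∘ δ)(vᵢ, vᵢ) = h″ ∑ cᵢ² + h′ ∑ D(wᵢ, wᵢ)`, where `wᵢ = vᵢ - cᵢ g` lies in `H = g^⊥`.
As `h′ ≥ 0` and `h″ ≥ K h′`, it suffices to show `∑ D(wᵢ, wᵢ) ≥ -K ∑ cᵢ²`. Diagonalising the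
frame operator `∑ wᵢ ⊗ wᵢ` on `H` writes `∑ D(wᵢ, wᵢ) = ∑ⱼ μⱼ D(eⱼ, eⱼ)` for an orthonormal basis
`eⱼ` of `H`, with `0 ≤ μⱼ ≤ 1` by Bessel and `∑ μⱼ = ∑ ‖wᵢ‖² = m - ∑ cᵢ²`. A linear function on
the capped simplex `{0 ≤ μ ≤ 1, ∑ μ ≤ m}` is minimised at an indicator of a set of at most `m`
indices, where (i) and (ii) give the bound.
-/

open RealInnerProductSpace

/-- The Hessian quadratic form of `ρ : ℝⁿ → ℝ` at `x`, evaluated on vectors `v, w`. -/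
noncomputable def Hess {n : ℕ} (ρ : EuclideanSpace ℝ (Fin n) → ℝ)
    (x v w : EuclideanSpace ℝ (Fin n)) : ℝ :=
  fderiv ℝ (fun y => fderiv ℝ ρ y v) x w

open Finset Filter Topology Module

section CappedSimplex

variable {ι : Type*} [Fintype ι]

theorem sum_add_mul_le_sum_mul_of_threshold {b μ : ι → ℝ} {S : Finset ι} {t m : ℝ}
    (ht : t ≤ 0) (hS : ∀ i ∈ S, b i ≤ t) (hSc : ∀ i ∉ S, t ≤ b i)
    (hμ0 : ∀ i, 0 ≤ μ i) (hμ1 : ∀ i, μ i ≤ 1) (hμm : ∑ i, μ i ≤ m) :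
    ∑ i ∈ S, b i + t * (m - #S) ≤ ∑ i, μ i * b i := by
  classical
  have hsplit : ∑ i ∈ S, (b i - t) ≤ ∑ i, μ i * (b i - t) := by
    rw [← sum_add_sum_compl S (fun i => μ i * (b i - t))]
    have hin : ∑ i ∈ S, (b i - t) ≤ ∑ i ∈ S, μ i * (b i - t) :=
      sum_le_sum fun i hi => by nlinarith [hS i hi, hμ1 i]
    have hout : 0 ≤ ∑ i ∈ Sᶜ, μ i * (b i - t) :=
      sum_nonneg fun i hi => mul_nonneg (hμ0 i) (sub_nonneg.2 (hSc i (mem_compl.1 hi)))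
    linarith
  have hcap : t * m ≤ t * ∑ i, μ i := mul_le_mul_of_nonpos_left hμm ht
  simp only [mul_sub, sum_sub_distrib, sum_const, nsmul_eq_mul, ← sum_mul] at hsplit
  linarith

theorem exists_card_le_sum_le_sum_mul (b : ι → ℝ) {μ : ι → ℝ} {m : ℕ}
    (hμ0 : ∀ i, 0 ≤ μ i) (hμ1 : ∀ i, μ i ≤ 1) (hμm : ∑ i, μ i ≤ m) :
    ∃ S : Finset ι, #S ≤ m ∧ ∑ i ∈ S, b i ≤ ∑ i, μ i * b i := by
  classical
  -- Exchanging single indices in a minimal `S` separates `b` on `S` from `b` off `S` by a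
  -- threshold `t ≤ 0`, and `t = 0` works unless `#S = m`.
  obtain ⟨S, hS, hmin⟩ := (univ.filter fun S : Finset ι => #S ≤ m).exists_min_image
    (fun S => ∑ i ∈ S, b i) ⟨∅, by simp⟩
  simp only [mem_filter, mem_univ, true_and] at hS hmin
  have hneg : ∀ i ∈ S, b i ≤ 0 := fun i hi => by
    have := hmin (S.erase i) (card_erase_le.trans hS)
    rw [sum_erase_eq_sub hi] at this
    linarith
  have hswap : ∀ i ∈ S, ∀ j ∉ S, b i ≤ b j := fun i hi j hj => by
    have hj' : j ∉ S.erase i := fun h => hj (mem_of_mem_erase h)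
    have := hmin (insert j (S.erase i))
      (by rw [card_insert_of_notMem hj', card_erase_of_mem hi]; have := card_pos.2 ⟨i, hi⟩; omega)
    rw [sum_insert hj', sum_erase_eq_sub hi] at this
    linarith
  refine ⟨S, hS, ?_⟩
  rcases hS.lt_or_eq with hlt | heq
  · have hpos : ∀ j ∉ S, 0 ≤ b j := fun j hj => by
      have := hmin (insert j S) (by rw [card_insert_of_notMem hj]; omega)
      rw [sum_insert hj] at this
      linarith
    simpa using sum_add_mul_le_sum_mul_of_threshold le_rfl hneg hpos hμ0 hμ1 hμm
  rcases S.eq_empty_or_nonempty with rfl | hne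
  · have hμ : ∀ i, μ i = 0 := fun i =>
      (sum_eq_zero_iff_of_nonneg fun i _ => hμ0 i).1
        (le_antisymm (by simpa [← heq] using hμm) (sum_nonneg fun i _ => hμ0 i)) i (mem_univ i)
    simp [hμ]
  · have := sum_add_mul_le_sum_mul_of_threshold (t := S.sup' hne b) (sup'_le _ _ hneg)
      (fun i hi => le_sup' b hi) (fun j hj => sup'_le _ _ fun i hi => hswap i hi j hj) hμ0 hμ1 hμm
    rwa [heq, sub_self, mul_zero, add_zero] at this

theorem sum_mul_add_mul_sub_sum_nonneg {a μ : ι → ℝ} {K : ℝ} {m : ℕ}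
    (ha : ∀ S : Finset ι, #S = m → 0 ≤ ∑ i ∈ S, a i) (haK : ∀ S : Finset ι, -K ≤ ∑ i ∈ S, a i)
    (hμ0 : ∀ i, 0 ≤ μ i) (hμ1 : ∀ i, μ i ≤ 1) (hμm : ∑ i, μ i ≤ m) :
    0 ≤ ∑ i, μ i * a i + K * (m - ∑ i, μ i) := by
  obtain ⟨S, hSm, hS⟩ := exists_card_le_sum_le_sum_mul (fun i => a i - K) hμ0 hμ1 hμm
  have hvertex : 0 ≤ ∑ i ∈ S, a i + K * (m - #S) := by
    rcases hSm.lt_or_eq with hlt | heq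
    · have hK : 0 ≤ K := by simpa using haK ∅
      have : (#S : ℝ) + 1 ≤ m := by exact_mod_cast hlt
      nlinarith [haK S]
    · simp [heq, ha S heq]
  simp only [mul_sub, sum_sub_distrib, sum_const, nsmul_eq_mul, ← sum_mul] at hS
  linarith

end CappedSimplex

section FrameOperator

variable {E : Type*} [NormedAddCommGroup E] [InnerProductSpace ℝ E]

theorem Orthonormal.exists_fin_sum_eq {ι : Type*} {e : ι → E} (he : Orthonormal ℝ e)
    {S : Finset ι} {k : ℕ} (hS : #S = k) (f : E → ℝ) :
    ∃ e' : Fin k → E, Orthonormal ℝ e' ∧ ∑ i ∈ S, f (e i) = ∑ i, f (e' i) := by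
  let σ : Fin k ≃ S := (S.equivFin.trans (finCongr hS)).symm
  refine ⟨fun i => e (σ i), he.comp _ (Subtype.val_injective.comp σ.injective), ?_⟩
  rw [← S.sum_coe_sort]
  exact (σ.sum_comp fun i => f (e i)).symm

theorem sum_apply_eq_sum_mul_apply_of_sum_inner_mul_inner_eq_ite {ι κ : Type*} [Fintype ι]
    [DecidableEq ι] [Fintype κ] (B : E →L[ℝ] E →L[ℝ] ℝ) (w : κ → E)
    (b : OrthonormalBasis ι ℝ E) {μ : ι → ℝ}
    (hμ : ∀ j k, ∑ i, ⟪w i, b j⟫ * ⟪w i, b k⟫ = if j = k then μ j else 0) :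
    ∑ i, B (w i) (w i) = ∑ j, μ j * B (b j) (b j) := by
  have hexpand : ∀ i, B (w i) (w i) = ∑ j, ∑ k, ⟪w i, b j⟫ * ⟪w i, b k⟫ * B (b j) (b k) := by
    intro i
    conv_lhs => rw [← b.sum_repr' (w i)]
    simp only [map_sum, map_smul, _root_.sum_apply, smul_apply, smul_eq_mul,
      mul_sum, real_inner_comm (w i)]
    rw [sum_comm]
    exact sum_congr rfl fun j _ => sum_congr rfl fun k _ => by ring
  calc ∑ i, B (w i) (w i)
      = ∑ j, ∑ k, (∑ i, ⟪w i, b j⟫ * ⟪w i, b k⟫) * B (b j) (b k) := by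
        simp_rw [hexpand, sum_mul]
        rw [sum_comm]
        exact sum_congr rfl fun j _ => sum_comm
    _ = ∑ j, μ j * B (b j) (b j) := by simp [hμ]

variable [FiniteDimensional ℝ E]

theorem exists_orthonormalBasis_sum_inner_mul_inner_eq_ite {κ : Type*} [Fintype κ] (w : κ → E) :
    ∃ (b : OrthonormalBasis (Fin (finrank ℝ E)) ℝ E) (μ : Fin (finrank ℝ E) → ℝ),
      ∀ j k, ∑ i, ⟪w i, b j⟫ * ⟪w i, b k⟫ = if j = k then μ j else 0 := by
  let T : E →L[ℝ] E := ∑ i, (innerSL ℝ (w i)).smulRight (w i)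
  have hT : ∀ u u', ⟪T u, u'⟫ = ∑ i, ⟪w i, u⟫ * ⟪w i, u'⟫ := fun u u' => by
    simp [T, sum_inner, real_inner_smul_left]
  have hsymm : (T : E →ₗ[ℝ] E).IsSymmetric := fun u u' => by
    rw [ContinuousLinearMap.coe_coe, hT, real_inner_comm, hT]
    exact sum_congr rfl fun i _ => mul_comm _ _
  refine ⟨hsymm.eigenvectorBasis rfl, hsymm.eigenvalues rfl, fun j k => ?_⟩
  rw [← hT, ← ContinuousLinearMap.coe_coe, hsymm.apply_eigenvectorBasis, real_inner_smul_left,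
    orthonormal_iff_ite.1 (hsymm.eigenvectorBasis rfl).orthonormal]
  split_ifs <;> simp

theorem sum_apply_add_mul_sub_sum_norm_sq_nonneg (B : E →L[ℝ] E →L[ℝ] ℝ) {K : ℝ} {m : ℕ}
    (hB : ∀ e : Fin m → E, Orthonormal ℝ e → 0 ≤ ∑ i, B (e i) (e i))
    (hBK : ∀ k (e : Fin k → E), Orthonormal ℝ e → -K ≤ ∑ i, B (e i) (e i))
    (w : Fin m → E) (hw : ∀ u, ∑ i, ⟪w i, u⟫ ^ 2 ≤ ‖u‖ ^ 2) :
    0 ≤ ∑ i, B (w i) (w i) + K * (m - ∑ i, ‖w i‖ ^ 2) := by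
  obtain ⟨b, μ, hμ⟩ := exists_orthonormalBasis_sum_inner_mul_inner_eq_ite w
  have hμsq : ∀ j, μ j = ∑ i, ⟪w i, b j⟫ ^ 2 := fun j => by simpa [sq] using (hμ j j).symm
  have hμ0 : ∀ j, 0 ≤ μ j := fun j => (hμsq j).symm ▸ sum_nonneg fun i _ => sq_nonneg _
  have hμ1 : ∀ j, μ j ≤ 1 := fun j => by simpa [hμsq j, b.orthonormal.1 j] using hw (b j)
  have hsumμ : ∑ j, μ j = ∑ i, ‖w i‖ ^ 2 := by
    calc ∑ j, μ j = ∑ i, ∑ j, ⟪w i, b j⟫ * ⟪b j, w i⟫ := by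
          rw [sum_comm]
          simp only [hμsq, sq, real_inner_comm (w _) (b _)]
      _ = ∑ i, ‖w i‖ ^ 2 := by simp only [b.sum_inner_mul_inner, real_inner_self_eq_norm_sq]
  have hnorm : ∀ i, ‖w i‖ ^ 2 ≤ 1 := fun i => by
    have hsq := (single_le_sum (fun k _ => sq_nonneg ⟪w k, w i⟫) (mem_univ i)).trans (hw (w i))
    rw [real_inner_self_eq_norm_sq] at hsq
    nlinarith [sq_nonneg (‖w i‖ ^ 2)]
  have hμm : ∑ j, μ j ≤ m := by
    rw [hsumμ]
    simpa using sum_le_sum fun i (_ : i ∈ univ) => hnorm i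
  have hsub : ∀ S : Finset _, #S = m → 0 ≤ ∑ j ∈ S, B (b j) (b j) := fun S hS => by
    obtain ⟨e, he, hsum⟩ := b.orthonormal.exists_fin_sum_eq hS fun u => B u u
    exact hsum ▸ hB e he
  have hsubK : ∀ S : Finset _, -K ≤ ∑ j ∈ S, B (b j) (b j) := fun S => by
    obtain ⟨e, he, hsum⟩ := b.orthonormal.exists_fin_sum_eq rfl fun u => B u u
    exact hsum ▸ hBK _ e he
  have key := sum_mul_add_mul_sub_sum_nonneg hsub hsubK hμ0 hμ1 hμm
  rwa [← sum_apply_eq_sum_mul_apply_of_sum_inner_mul_inner_eq_ite B w b hμ, hsumμ] at key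

theorem sum_apply_add_mul_sum_inner_sq_nonneg (D : E →L[ℝ] E →L[ℝ] ℝ) {g : E} (hg : ‖g‖ = 1)
    (hDg : ∀ u, D u g = 0) (hgD : ∀ u, D g u = 0) {K : ℝ} {m : ℕ}
    (hD : ∀ v : Fin m → E, Orthonormal ℝ v → (∀ i, ⟪g, v i⟫ = 0) → 0 ≤ ∑ i, D (v i) (v i))
    (hDK : ∀ k (v : Fin k → E), Orthonormal ℝ v → (∀ i, ⟪g, v i⟫ = 0) →
      -K ≤ ∑ i, D (v i) (v i))
    {v : Fin m → E} (hv : Orthonormal ℝ v) :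
    0 ≤ ∑ i, D (v i) (v i) + K * ∑ i, ⟪g, v i⟫ ^ 2 := by
  let H := (ℝ ∙ g)ᗮ
  have hgg : ⟪g, g⟫ = 1 := by rw [real_inner_self_eq_norm_sq, hg, one_pow]
  have hmem : ∀ u, u - ⟪g, u⟫ • g ∈ H := fun u => by
    rw [Submodule.mem_orthogonal_singleton_iff_inner_right, inner_sub_right,
      real_inner_smul_right, hgg, mul_one, sub_self]
  let w : Fin m → H := fun i => ⟨v i - ⟪g, v i⟫ • g, hmem (v i)⟩
  have hperp : ∀ u : H, ⟪g, u⟫ = 0 := fun u =>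
    Submodule.mem_orthogonal_singleton_iff_inner_right.1 u.2
  have hinner : ∀ i (u : H), ⟪w i, u⟫ = ⟪v i, u⟫ := fun i u => by
    rw [Submodule.coe_inner, inner_sub_left, real_inner_smul_left, hperp, mul_zero, sub_zero]
  have hnorm : ∀ i, ‖w i‖ ^ 2 = 1 - ⟪g, v i⟫ ^ 2 := fun i => by
    rw [← real_inner_self_eq_norm_sq, hinner, show ((w i : H) : E) = v i - ⟪g, v i⟫ • g from rfl,
      inner_sub_right, real_inner_smul_right, real_inner_self_eq_norm_sq, hv.1 i, real_inner_comm g]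
    ring
  have hDw : ∀ i, D (v i) (v i) = D (w i) (w i) := fun i => by
    have hsplit : v i = (w i : E) + ⟪g, v i⟫ • g := (sub_add_cancel _ _).symm
    conv_lhs => rw [hsplit]
    simp [hDg, hgD]
  have key := sum_apply_add_mul_sub_sum_norm_sq_nonneg (D.bilinearComp H.subtypeL H.subtypeL)
    (fun e he => hD _ (H.subtypeₗᵢ.orthonormal_comp_iff.2 he) fun i => hperp (e i))
    (fun k e he => hDK k _ (H.subtypeₗᵢ.orthonormal_comp_iff.2 he) fun i => hperp (e i)) w
    (fun u => by simpa [hinner] using hv.sum_inner_products_le (u : E) (s := univ))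
  simp only [ContinuousLinearMap.bilinearComp_apply, Submodule.subtypeL_apply, ← hDw, hnorm,
    sum_sub_distrib, sum_const, card_univ, Fintype.card_fin, nsmul_eq_mul, mul_one] at key
  linarith

end FrameOperator

section Hessian

variable {n : ℕ} {δ : EuclideanSpace ℝ (Fin n) → ℝ} {x : EuclideanSpace ℝ (Fin n)}

theorem hess_eq_fderiv_fderiv_apply (hδ : DifferentiableAt ℝ (fderiv ℝ δ) x)
    (v w : EuclideanSpace ℝ (Fin n)) : Hess δ x v w = fderiv ℝ (fderiv ℝ δ) x w v := by
  rw [Hess, fderiv_clm_apply hδ (differentiableAt_const v)]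
  simp

theorem hess_symm (hδ : ContDiffAt ℝ 2 δ x) (v w : EuclideanSpace ℝ (Fin n)) :
    Hess δ x v w = Hess δ x w v := by
  have hd : DifferentiableAt ℝ (fderiv ℝ δ) x :=
    (hδ.fderiv_right (m := 1) le_rfl).differentiableAt one_ne_zero
  rw [hess_eq_fderiv_fderiv_apply hd, hess_eq_fderiv_fderiv_apply hd,
    (hδ.isSymmSndFDerivAt (by simp)).eq]

theorem hess_gradient_left_eq_zero (hδ : DifferentiableAt ℝ (fderiv ℝ δ) x)
    (hgrad : ∀ᶠ y in 𝓝 x, ‖gradient δ y‖ = 1) (w : EuclideanSpace ℝ (Fin n)) :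
    Hess δ x (gradient δ x) w = 0 := by
  let L : StrongDual ℝ (EuclideanSpace ℝ (Fin n)) →L[ℝ] EuclideanSpace ℝ (Fin n) :=
    (InnerProductSpace.toDual ℝ _).symm.toContinuousLinearEquiv.toContinuousLinearMap
  have hG : HasFDerivAt (gradient δ) (L.comp (fderiv ℝ (fderiv ℝ δ) x)) x :=
    L.hasFDerivAt.comp x hδ.hasFDerivAt
  have hconst : HasFDerivAt (fun y => ‖gradient δ y‖ ^ 2) (0 : _ →L[ℝ] ℝ) x :=
    (hasFDerivAt_const 1 x).congr_of_eventuallyEq (hgrad.mono fun y hy => by simp [hy])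
  have h0 := congrArg (· w) (hG.norm_sq.unique hconst)
  simp only [smul_apply, ContinuousLinearMap.comp_apply, innerSL_apply_apply, zero_apply,
    inner_gradient_left, smul_eq_zero, two_ne_zero, false_or] at h0
  rw [hess_eq_fderiv_fderiv_apply hδ, ← InnerProductSpace.toDual_symm_apply (𝕜 := ℝ),
    real_inner_comm, inner_gradient_left]
  exact h0

theorem hess_comp {h : ℝ → ℝ} (hh : ContDiffAt ℝ 2 h (δ x)) (hδ : ContDiffAt ℝ 2 δ x)
    (v w : EuclideanSpace ℝ (Fin n)) :
    Hess (h ∘ δ) x v w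
      = deriv (deriv h) (δ x) * (fderiv ℝ δ x v * fderiv ℝ δ x w)
        + deriv h (δ x) * Hess δ x v w := by
  have hd : DifferentiableAt ℝ (fderiv ℝ δ) x :=
    (hδ.fderiv_right (m := 1) le_rfl).differentiableAt one_ne_zero
  have hchain : (fun y => fderiv ℝ (h ∘ δ) y v) =ᶠ[𝓝 x]
      fun y => deriv h (δ y) * fderiv ℝ δ y v := by
    filter_upwards [hδ.eventually (by simp),
      hδ.continuousAt.eventually (hh.eventually (by simp))] with y hδy hhy
    rw [fderiv_comp y (hhy.differentiableAt two_ne_zero) (hδy.differentiableAt two_ne_zero),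
      ContinuousLinearMap.comp_apply, fderiv_eq_smul_deriv, smul_eq_mul, mul_comm]
  have hderiv : DifferentiableAt ℝ (deriv h) (δ x) := by
    have := ((hh.fderiv_right (m := 1) le_rfl).differentiableAt one_ne_zero).clm_apply
      (differentiableAt_const (1 : ℝ))
    simpa only [fderiv_apply_one_eq_deriv] using this
  rw [Hess, hchain.fderiv_eq, fderiv_fun_mul (c := fun y => deriv h (δ y))
    (hderiv.comp x (hδ.differentiableAt two_ne_zero)) (hd.clm_apply (differentiableAt_const v)),
    fderiv_fun_comp x hderiv (hδ.differentiableAt two_ne_zero)]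
  simp only [add_apply, smul_apply, ContinuousLinearMap.comp_apply, fderiv_eq_smul_deriv,
    smul_eq_mul, Hess]
  ring

end Hessian

theorem comp_convexification_isMPSH_general {n m : ℕ}
    (V : Set (EuclideanSpace ℝ (Fin n))) (hV : IsOpen V)
    (δ : EuclideanSpace ℝ (Fin n) → ℝ) (hδ : ContDiffOn ℝ 2 δ V)
    (hgrad : ∀ x ∈ V, ‖gradient δ x‖ = 1)
    (K : ℝ)
    (h1 : ∀ x ∈ V, ∀ v : Fin m → EuclideanSpace ℝ (Fin n), Orthonormal ℝ v →
        (∀ i, ⟪gradient δ x, v i⟫ = 0) → 0 ≤ ∑ i, Hess δ x (v i) (v i))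
    (h2 : ∀ x ∈ V, ∀ k : ℕ, ∀ v : Fin k → EuclideanSpace ℝ (Fin n),
        Orthonormal ℝ v → (∀ i, ⟪gradient δ x, v i⟫ = 0) →
        -K ≤ ∑ i, Hess δ x (v i) (v i))
    (h : ℝ → ℝ) (hh : ContDiff ℝ 2 h)
    (hh' : ∀ x ∈ V, 0 ≤ deriv h (δ x))
    (hh'' : ∀ x ∈ V, K * deriv h (δ x) ≤ deriv (deriv h) (δ x)) :
    ∀ x ∈ V, ∀ v : Fin m → EuclideanSpace ℝ (Fin n), Orthonormal ℝ v →
      0 ≤ ∑ i, Hess (h ∘ δ) x (v i) (v i) := by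
  intro x hx v hv
  have hδx : ContDiffAt ℝ 2 δ x := hδ.contDiffAt (hV.mem_nhds hx)
  have hd : DifferentiableAt ℝ (fderiv ℝ δ) x :=
    (hδx.fderiv_right (m := 1) le_rfl).differentiableAt one_ne_zero
  let D := (fderiv ℝ (fderiv ℝ δ) x).flip
  have hD : ∀ u w, D u w = Hess δ x u w := fun u w => (hess_eq_fderiv_fderiv_apply hd u w).symm
  have hgD : ∀ u, D (gradient δ x) u = 0 := fun u => by
    rw [hD, hess_gradient_left_eq_zero hd (eventually_of_mem (hV.mem_nhds hx) hgrad)]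
  have hDg : ∀ u, D u (gradient δ x) = 0 := fun u => by rw [hD, hess_symm hδx, ← hD, hgD]
  have key := sum_apply_add_mul_sum_inner_sq_nonneg D (hgrad x hx) hDg hgD
    (by simpa only [hD] using h1 x hx) (by simpa only [hD] using h2 x hx) hv
  have hcomp : ∀ i, Hess (h ∘ δ) x (v i) (v i)
      = deriv (deriv h) (δ x) * ⟪gradient δ x, v i⟫ ^ 2 + deriv h (δ x) * D (v i) (v i) :=
    fun i => by rw [hess_comp hh.contDiffAt hδx, hD, inner_gradient_left, sq]
  have hsq : 0 ≤ ∑ i, ⟪gradient δ x, v i⟫ ^ 2 := sum_nonneg fun i _ => sq_nonneg _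
  simp only [hcomp, sum_add_distrib, ← mul_sum]
  nlinarith [mul_nonneg (hh' x hx) key, mul_le_mul_of_nonneg_right (hh'' x hx) hsq]

/-- Let `δ` be `C²` on an open set `V ⊆ ℝⁿ` with `‖∇δ‖ ≡ 1`, let
`K ≥ 0`, and assume that at every `x ∈ V`: (i) for every `m`-dimensional subspace of
the hyperplane `(∇δ(x))^⊥` (given by an orthonormal `m`-tuple orthogonal to `∇δ(x)`)
the trace of the Hessian of `δ` is `≥ 0`; and (ii) every finite orthonormal family
`v₁,…,v_k` in `(∇δ(x))^⊥` satisfies `∑ᵢ Hess δ(x)(vᵢ,vᵢ) ≥ −K`. If `h : ℝ → ℝ` is `C²`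
with `h′ ≥ 0` and `h″ ≥ K·h′` on the image `δ(V)`, then `h ∘ δ` is
`m`-plurisubharmonic on `V`: for every `x ∈ V` and every `m`-dimensional subspace
`Λ ⊆ ℝⁿ` (given by an orthonormal `m`-tuple) the trace of the Hessian of `h ∘ δ` on
`Λ` is nonnegative. -/
theorem comp_convexification_isMPSH {n m : ℕ} (hn : 2 ≤ n) (hm : 1 ≤ m)
    (hmn : m ≤ n - 1)
    (V : Set (EuclideanSpace ℝ (Fin n))) (hV : IsOpen V)
    (δ : EuclideanSpace ℝ (Fin n) → ℝ) (hδ : ContDiffOn ℝ 2 δ V)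
    (hgrad : ∀ x ∈ V, ‖gradient δ x‖ = 1)
    (K : ℝ) (hK : 0 ≤ K)
    (h1 : ∀ x ∈ V, ∀ v : Fin m → EuclideanSpace ℝ (Fin n), Orthonormal ℝ v →
        (∀ i, ⟪gradient δ x, v i⟫ = 0) → 0 ≤ ∑ i, Hess δ x (v i) (v i))
    (h2 : ∀ x ∈ V, ∀ k : ℕ, ∀ v : Fin k → EuclideanSpace ℝ (Fin n),
        Orthonormal ℝ v → (∀ i, ⟪gradient δ x, v i⟫ = 0) →
        -K ≤ ∑ i, Hess δ x (v i) (v i))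
    (h : ℝ → ℝ) (hh : ContDiff ℝ 2 h)
    (hh' : ∀ x ∈ V, 0 ≤ deriv h (δ x))
    (hh'' : ∀ x ∈ V, K * deriv h (δ x) ≤ deriv (deriv h) (δ x)) :
    ∀ x ∈ V, ∀ v : Fin m → EuclideanSpace ℝ (Fin n), Orthonormal ℝ v →
      0 ≤ ∑ i, Hess (h ∘ δ) x (v i) (v i) :=
  comp_convexification_isMPSH_general V hV δ hδ hgrad K h1 h2 h hh hh' hh''
end

section
/- Let D ⊆ ℝ² be a domain and let Ω_D = {(x,y,z) ∈ ℝ³ : |z| < 1, z²(x²+y²) < 1, and (x,y) ∈ D if z = 0}. Then every nonconstant conformal harmonic map f = (f₁, f₂, f₃) : ℂ → ℝ³ with f(ℂ) ⊆ Ω_D satisfies f₃ ≡ 0 and f(ℂ) ⊆ D × {0}. -/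
/-!
Each coordinate of a harmonic map `ℂ → ℝ³` is harmonic, so by Liouville's theorem for harmonic
functions every bounded coordinate is constant. The third coordinate is bounded by `1`, hence
constant, say `c`. If `c ≠ 0`, then `c² (f₁² + f₂²) < 1` bounds `f₁` and `f₂` by `|c|⁻¹`, so `f`
would be constant. Thus `c = 0`, and the condition for points of `Ω_D` on the plane `z = 0` puts
`(f₁, f₂)` in `D`.
-/

open RealInnerProductSpace

/-- A map `f : ℂ → ℝⁿ` is conformal harmonic if it is `C²`, its partial derivatives
`f_x = Df·1` and `f_y = Df·i` satisfy `f_x · f_y = 0` and `|f_x| = |f_y|` at every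
point (conformality), and `f_xx + f_yy = 0` (harmonicity). -/
def ConformalHarmonic {n : ℕ} (f : ℂ → EuclideanSpace ℝ (Fin n)) : Prop :=
  ContDiff ℝ 2 f ∧
  (∀ z : ℂ, ⟪fderiv ℝ f z 1, fderiv ℝ f z Complex.I⟫ = 0 ∧
      ‖fderiv ℝ f z 1‖ = ‖fderiv ℝ f z Complex.I‖) ∧
  (∀ z : ℂ, fderiv ℝ (fun w => fderiv ℝ f w 1) z 1
      + fderiv ℝ (fun w => fderiv ℝ f w Complex.I) z Complex.I = 0)

/-- The domain `Ω_D = {(x,y,z) ∈ ℝ³ : |z| < 1, z²(x²+y²) < 1, (x,y) ∈ D if z = 0}`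
associated with a planar domain `D ⊆ ℝ²`. -/
def OmegaD (D : Set (ℝ × ℝ)) : Set (EuclideanSpace ℝ (Fin 3)) :=
  {p | |p 2| < 1 ∧ (p 2) ^ 2 * ((p 0) ^ 2 + (p 1) ^ 2) < 1 ∧
      (p 2 = 0 → (p 0, p 1) ∈ D)}

open InnerProductSpace Complex

theorem harmonicOnNhd_univ_of_partials {F : Type*} [NormedAddCommGroup F] [NormedSpace ℝ F]
    {f : ℂ → F} (hf : ContDiff ℝ 2 f)
    (hΔ : ∀ z, fderiv ℝ (fun w => fderiv ℝ f w 1) z 1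
      + fderiv ℝ (fun w => fderiv ℝ f w I) z I = 0) :
    HarmonicOnNhd f Set.univ := by
  have hdf : Differentiable ℝ (fderiv ℝ f) :=
    (hf.fderiv_right (m := 1) le_rfl).differentiable one_ne_zero
  have partial_eq (v z : ℂ) :
      fderiv ℝ (fun w => fderiv ℝ f w v) z v = iteratedFDeriv ℝ 2 f z ![v, v] := by
    rw [fderiv_clm_apply (hdf z) (differentiableAt_const v), iteratedFDeriv_two_apply]
    simp
  refine fun z _ => ⟨hf.contDiffAt, Filter.Eventually.of_forall fun w => ?_⟩
  simpa only [laplacian_eq_iteratedFDeriv_complexPlane, Pi.zero_apply, ← partial_eq] using hΔ w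

theorem InnerProductSpace.HarmonicOnNhd.apply_eq_apply_of_abs_le {ι : Type*} [Fintype ι]
    {f : ℂ → EuclideanSpace ℝ ι} (hf : HarmonicOnNhd f Set.univ) (i : ι) {C : ℝ}
    (hC : ∀ z, |f z i| ≤ C) (z w : ℂ) : f z i = f w i :=
  bounded_harmonic_on_complex_plane_is_constant (EuclideanSpace.proj i ∘ f)
    (hf.comp_CLM _) (isBounded_iff_forall_norm_le.2 ⟨C, by simpa using hC⟩) z w

theorem abs_lt_inv_abs_of_mem_OmegaD {D : Set (ℝ × ℝ)} {p : EuclideanSpace ℝ (Fin 3)}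
    (hp : p ∈ OmegaD D) (hp2 : p 2 ≠ 0) {i : Fin 3} (hi : i ≠ 2) : |p i| < |p 2|⁻¹ := by
  have hsq : (p 2 * p i) ^ 2 < 1 := by
    have := hp.2.1
    obtain rfl | rfl : i = 0 ∨ i = 1 := by omega
    · nlinarith [sq_nonneg (p 1)]
    · nlinarith [sq_nonneg (p 0)]
  rw [← mul_one |p 2|⁻¹, lt_inv_mul_iff₀ (abs_pos.2 hp2), ← abs_mul]
  exact (sq_lt_one_iff_abs_lt_one _).1 hsq

theorem conformalHarmonic_into_OmegaD_lies_in_D_general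
    (D : Set (ℝ × ℝ))
    (f : ℂ → EuclideanSpace ℝ (Fin 3)) (hf : ConformalHarmonic f)
    (hrange : ∀ z : ℂ, f z ∈ OmegaD D)
    (hnc : ∃ z w : ℂ, f z ≠ f w) :
    (∀ z : ℂ, f z 2 = 0) ∧ (∀ z : ℂ, (f z 0, f z 1) ∈ D) := by
  have hharm := harmonicOnNhd_univ_of_partials hf.1 hf.2.2
  have hf2 : ∀ z, f z 2 = f 0 2 :=
    fun z => hharm.apply_eq_apply_of_abs_le 2 (fun w => (hrange w).1.le) z 0
  suffices hc : f 0 2 = 0 by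
    have hz : ∀ z, f z 2 = 0 := fun z => (hf2 z).trans hc
    exact ⟨hz, fun z => (hrange z).2.2 (hz z)⟩
  by_contra hc
  obtain ⟨z, w, hzw⟩ := hnc
  refine hzw (PiLp.ext fun i => ?_)
  by_cases hi : i = 2
  · rw [hi, hf2 z, hf2 w]
  · refine hharm.apply_eq_apply_of_abs_le i (C := |f 0 2|⁻¹) (fun y => ?_) z w
    have hy := abs_lt_inv_abs_of_mem_OmegaD (hrange y) ((hf2 y).trans_ne hc) hi
    exact (hf2 y ▸ hy).le

/-- Let `D ⊆ ℝ²` be a domain. Every nonconstant conformal harmonic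
map `f = (f₁,f₂,f₃) : ℂ → ℝ³` with image in `Ω_D` satisfies `f₃ ≡ 0` and
`f(ℂ) ⊆ D × {0}`. -/
theorem conformalHarmonic_into_OmegaD_lies_in_D
    (D : Set (ℝ × ℝ)) (hDne : D.Nonempty) (hDopen : IsOpen D)
    (hDconn : IsConnected D)
    (f : ℂ → EuclideanSpace ℝ (Fin 3)) (hf : ConformalHarmonic f)
    (hrange : ∀ z : ℂ, f z ∈ OmegaD D)
    (hnc : ∃ z w : ℂ, f z ≠ f w) :
    (∀ z : ℂ, f z 2 = 0) ∧ (∀ z : ℂ, (f z 0, f z 1) ∈ D) :=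
  conformalHarmonic_into_OmegaD_lies_in_D_general D f hf hrange hnc
end

section
/- Let n ≥ 3 and let Ω ⊆ ℝⁿ be a convex domain (nonempty, open, convex). Then every conformal harmonic map ℂ → Ω is constant if and only if Ω does not contain any affine 2-plane (i.e., there are no p ∈ ℝⁿ and linearly independent u, v ∈ ℝⁿ with p + span{u,v} ⊆ Ω). -/
open RealInnerProductSpace

/-!
If `Ω` contains the plane `p + span{u, v}`, orthogonalising `v` against `u` and rescaling it to
the length of `u` gives an affine map `z ↦ p + (Re z) u + (Im z) e` into `Ω`, which is a
nonconstant conformal harmonic map.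

Conversely, let `f : ℂ → Ω` be a nonconstant conformal harmonic map and `φ` a continuous linear
functional bounded above on `Ω`. Then `φ ∘ f` is a harmonic function on `ℂ` bounded above, hence
constant: it is the real part of an entire `F`, and `exp F` is bounded. So `φ` kills the partial
derivatives `f_x, f_y` at a point `z₀` where `Df ≠ 0`; by conformality they are orthogonal of equal
nonzero length, hence independent. Since an open convex set contains every point that no such `φ`
separates from it (Hahn–Banach), `f z₀ + span{f_x, f_y} ⊆ Ω`.
-/

open Complex InnerProductSpace Set

lemma harmonicOnNhd_univ_of_fderiv_fderiv {E : Type*} [NormedAddCommGroup E]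
    [NormedSpace ℝ E] {f : ℂ → E} (hf : ContDiff ℝ 2 f)
    (hΔ : ∀ z, fderiv ℝ (fun w => fderiv ℝ f w 1) z 1
      + fderiv ℝ (fun w => fderiv ℝ f w I) z I = 0) :
    HarmonicOnNhd f univ := by
  have hf' : Differentiable ℝ (fderiv ℝ f) :=
    (hf.fderiv_right le_rfl).differentiable one_ne_zero
  refine fun z _ => ⟨hf.contDiffAt, Filter.Eventually.of_forall fun w => ?_⟩
  have hw := hΔ w
  rw [fderiv_clm_apply (hf' w) (differentiableAt_const _),
    fderiv_clm_apply (hf' w) (differentiableAt_const _)] at hw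
  simpa [laplacian_eq_iteratedFDeriv_complexPlane, iteratedFDeriv_two_apply] using hw

lemma InnerProductSpace.HarmonicOnNhd.apply_eq_apply_of_bddAbove {u : ℂ → ℝ}
    (hu : HarmonicOnNhd u univ) (hbdd : BddAbove (range u)) (z w : ℂ) : u z = u w := by
  obtain ⟨F, hF, hre⟩ := hu.exists_analyticOnNhd_univ_re_eq
  obtain ⟨c, hc⟩ := hbdd
  have hexp : Differentiable ℂ (fun z => exp (F z)) :=
    fun z => (hF z (mem_univ z)).differentiableAt.cexp
  have hbounded : Bornology.IsBounded (range fun z => exp (F z)) := by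
    refine isBounded_iff_forall_norm_le.2 ⟨Real.exp c, ?_⟩
    rintro _ ⟨z, rfl⟩
    rw [norm_exp, congrFun hre z]
    exact Real.exp_le_exp.2 (hc ⟨z, rfl⟩)
  have := congrArg norm (hexp.apply_eq_apply_of_bounded hbounded z w)
  simpa [norm_exp, ← congrFun hre z, ← congrFun hre w] using this

lemma InnerProductSpace.HarmonicOnNhd.clm_comp_fderiv_eq_zero_of_bddAbove {E : Type*}
    [NormedAddCommGroup E] [NormedSpace ℝ E] {f : ℂ → E} (hf : HarmonicOnNhd f univ)
    {φ : StrongDual ℝ E} (hbdd : BddAbove (range (φ ∘ f))) (z : ℂ) :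
    φ.comp (fderiv ℝ f z) = 0 := by
  have hconst : φ ∘ f = fun _ => φ (f z) :=
    funext fun w => (hf.comp_CLM φ).apply_eq_apply_of_bddAbove hbdd w z
  have hdiff : DifferentiableAt ℝ f z := (hf z (mem_univ z)).1.differentiableAt two_ne_zero
  rw [← (φ.hasFDerivAt.comp z hdiff.hasFDerivAt).fderiv, hconst, fderiv_const_apply]

lemma Convex.mem_of_forall_bddAbove_apply_eq {E : Type*} [TopologicalSpace E]
    [AddCommGroup E] [Module ℝ E] [IsTopologicalAddGroup E] [ContinuousSMul ℝ E] {Ω : Set E}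
    (hconv : Convex ℝ Ω) (hopen : IsOpen Ω) {p q : E} (hp : p ∈ Ω)
    (h : ∀ φ : StrongDual ℝ E, BddAbove (φ '' Ω) → φ q = φ p) : q ∈ Ω := by
  by_contra hq
  obtain ⟨φ, hφ⟩ := geometric_hahn_banach_open_point hconv hopen hq
  have hbdd : BddAbove (φ '' Ω) := ⟨φ q, forall_mem_image.2 fun x hx => (hφ x hx).le⟩
  exact (hφ p hp).ne (h φ hbdd).symm

lemma ContinuousLinearMap.ext_complex {E : Type*} [AddCommGroup E] [Module ℝ E]
    [TopologicalSpace E] {L₁ L₂ : ℂ →L[ℝ] E} (h1 : L₁ 1 = L₂ 1) (hI : L₁ I = L₂ I) :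
    L₁ = L₂ :=
  ContinuousLinearMap.coe_injective <| basisOneI.ext fun i => by fin_cases i <;> simp [h1, hI]

lemma linearIndependent_apply_one_apply_I {E : Type*} [NormedAddCommGroup E]
    [InnerProductSpace ℝ E] {L : ℂ →L[ℝ] E} (hL : L ≠ 0) (horth : ⟪L 1, L I⟫ = 0)
    (hnorm : ‖L 1‖ = ‖L I‖) : LinearIndependent ℝ ![L 1, L I] := by
  have hzero : L 1 = 0 ↔ L I = 0 := by rw [← norm_eq_zero, hnorm, norm_eq_zero]
  have h1 : L 1 ≠ 0 := fun h1 =>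
    hL (L.ext_complex (by simpa using h1) (by simpa using hzero.1 h1))
  have hI : L I ≠ 0 := fun hI => h1 (hzero.2 hI)
  refine linearIndependent_of_ne_zero_of_inner_eq_zero (fun i => ?_) fun i j hij => ?_
  · fin_cases i <;> simpa
  · fin_cases i <;> fin_cases j <;> simp_all [real_inner_comm]

lemma exists_inner_eq_zero_norm_eq_of_linearIndependent {E : Type*} [NormedAddCommGroup E]
    [InnerProductSpace ℝ E] {u v : E} (h : LinearIndependent ℝ ![u, v]) :
    ∃ a b : ℝ, ⟪u, a • u + b • v⟫ = 0 ∧ ‖a • u + b • v‖ = ‖u‖ := by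
  set d := ⟪u, v⟫ / ⟪u, u⟫
  set w := v - d • u
  have hu : ⟪u, u⟫ ≠ 0 := inner_self_ne_zero.2 (h.ne_zero 0)
  have hw : ‖w‖ ≠ 0 := by
    refine norm_ne_zero_iff.2 fun hw => ?_
    have hcomb : -d • u + (1 : ℝ) • v = 0 := by rw [← hw]; module
    have := (LinearIndependent.pair_iff.1 h (-d) 1 hcomb).2
    norm_num at this
  set c := ‖u‖ / ‖w‖
  refine ⟨-c * d, c, ?_, ?_⟩ <;> rw [show (-c * d) • u + c • v = c • w by module]
  · rw [real_inner_smul_right, inner_sub_right, real_inner_smul_right, div_mul_cancel₀ _ hu,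
      sub_self, mul_zero]
  · rw [norm_smul, Real.norm_of_nonneg (by positivity), div_mul_cancel₀ _ hw]

lemma conformalHarmonic_affine {n : ℕ} (p u e : EuclideanSpace ℝ (Fin n))
    (horth : ⟪u, e⟫ = 0) (hnorm : ‖u‖ = ‖e‖) :
    ConformalHarmonic fun z : ℂ => p + z.re • u + z.im • e := by
  set L : ℂ →L[ℝ] EuclideanSpace ℝ (Fin n) := reCLM.smulRight u + imCLM.smulRight e
  have heq : (fun z : ℂ => p + z.re • u + z.im • e) = fun z => p + L z := by
    ext1 z; simp [L, add_assoc]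
  have hL : fderiv ℝ (fun z => p + L z) = fun _ => L :=
    funext fun z => (L.hasFDerivAt.const_add p).fderiv
  rw [heq]
  refine ⟨contDiff_const.add L.contDiff, fun z => ?_, fun z => ?_⟩
  · rw [hL]
    simpa [L] using ⟨horth, hnorm⟩
  · simp

theorem convex_weakly_hyperbolic_iff_no_affine_two_plane_general {n : ℕ}
    (Ω : Set (EuclideanSpace ℝ (Fin n))) (hopen : IsOpen Ω)
    (hconv : Convex ℝ Ω) :
    (∀ f : ℂ → EuclideanSpace ℝ (Fin n), ConformalHarmonic f →
        (∀ z : ℂ, f z ∈ Ω) → ∀ z w : ℂ, f z = f w) ↔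
      ¬ ∃ (p u v : EuclideanSpace ℝ (Fin n)), LinearIndependent ℝ ![u, v] ∧
          ∀ s t : ℝ, p + s • u + t • v ∈ Ω := by
  constructor
  · rintro hconst ⟨p, u, v, hind, hplane⟩
    obtain ⟨a, b, horth, hnorm⟩ := exists_inner_eq_zero_norm_eq_of_linearIndependent hind
    have hmem (z : ℂ) : p + z.re • u + z.im • (a • u + b • v) ∈ Ω := by
      convert hplane (z.re + z.im * a) (z.im * b) using 1
      module
    have h01 := hconst _ (conformalHarmonic_affine p u _ horth hnorm.symm) hmem 0 1
    exact hind.ne_zero 0 (by simpa using h01.symm)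
  · intro hno_plane f hf hfΩ z w
    by_contra hzw
    obtain ⟨z₀, hz₀⟩ : ∃ z₀, fderiv ℝ f z₀ ≠ 0 := by
      by_contra! h
      exact hzw (is_const_of_fderiv_eq_zero (hf.1.differentiable two_ne_zero) h z w)
    have hharm := harmonicOnNhd_univ_of_fderiv_fderiv hf.1 hf.2.2
    have hkill (φ : StrongDual ℝ (EuclideanSpace ℝ (Fin n))) (hφ : BddAbove (φ '' Ω)) :
        φ.comp (fderiv ℝ f z₀) = 0 :=
      hharm.clm_comp_fderiv_eq_zero_of_bddAbove
        (hφ.mono (by rw [range_comp]; exact image_mono (range_subset_iff.2 hfΩ))) z₀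
    have hind := linearIndependent_apply_one_apply_I hz₀ (hf.2.1 z₀).1 (hf.2.1 z₀).2
    refine hno_plane ⟨f z₀, _, _, hind,
      fun s t => hconv.mem_of_forall_bddAbove_apply_eq hopen (hfΩ z₀) fun φ hφ => ?_⟩
    have h1 : φ (fderiv ℝ f z₀ 1) = 0 := DFunLike.congr_fun (hkill φ hφ) 1
    have hI : φ (fderiv ℝ f z₀ I) = 0 := DFunLike.congr_fun (hkill φ hφ) I
    simp [h1, hI]

/-- Let `n ≥ 3` and let `Ω ⊆ ℝⁿ` be a convex domain. Then every
conformal harmonic map `ℂ → Ω` is constant if and only if `Ω` contains no affine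
`2`-plane `p + span{u,v}` with `u, v` linearly independent. -/
theorem convex_weakly_hyperbolic_iff_no_affine_two_plane {n : ℕ} (hn : 3 ≤ n)
    (Ω : Set (EuclideanSpace ℝ (Fin n))) (hne : Ω.Nonempty) (hopen : IsOpen Ω)
    (hconv : Convex ℝ Ω) :
    (∀ f : ℂ → EuclideanSpace ℝ (Fin n), ConformalHarmonic f →
        (∀ z : ℂ, f z ∈ Ω) → ∀ z w : ℂ, f z = f w) ↔
      ¬ ∃ (p u v : EuclideanSpace ℝ (Fin n)), LinearIndependent ℝ ![u, v] ∧
          ∀ s t : ℝ, p + s • u + t • v ∈ Ω :=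
  convex_weakly_hyperbolic_iff_no_affine_two_plane_general Ω hopen hconv
end

section
/- Let Ω ⊆ ℝⁿ be an open set and let ρ : Ω → ℝ be a C² function which is 2-plurisubharmonic and bounded above on Ω. Then for every conformal harmonic map f : ℂ → ℝⁿ with f(ℂ) ⊆ Ω, the composition ρ ∘ f : ℂ → ℝ is constant. -/
open RealInnerProductSpace

/-- A `C²` function `ρ` is `2`-plurisubharmonic on `Ω` if the trace of the restriction
of its Hessian to any `2`-dimensional linear subspace of `ℝⁿ` (given by an orthonormal
pair of vectors) is nonnegative at every point of `Ω`. -/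
def Is2PSH {n : ℕ} (ρ : EuclideanSpace ℝ (Fin n) → ℝ)
    (Ω : Set (EuclideanSpace ℝ (Fin n))) : Prop :=
  ∀ x ∈ Ω, ∀ v : Fin 2 → EuclideanSpace ℝ (Fin n),
    Orthonormal ℝ v → 0 ≤ ∑ i, Hess ρ x (v i) (v i)

open Filter Topology Metric Laplacian InnerProductSpace

/-!
Along a conformal harmonic map `f`, the Laplacian of `ρ ∘ f` is
`Dρ(Δf) + Hess ρ (f_x, f_x) + Hess ρ (f_y, f_y)`. Harmonicity kills the first term, and since
`f_x, f_y` are orthogonal of equal length, the rest is a nonnegative multiple of the trace of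
`Hess ρ` on a 2-plane. So `ρ ∘ f` is a `C²` subharmonic function on `ℂ` bounded above, and such a
function `u` is constant: on the annulus `r ≤ |z - z₀| ≤ R` the maximum principle bounds `u` by
the harmonic function `m + c log (|z - z₀| / r)` equal to `m = max_{|z - z₀| = r} u` on the inner
circle and to `sup u` on the outer one; letting `R → ∞` gives `u ≤ m` off the small disc, and
`m → u z₀` as `r → 0`.
-/

section SecondDerivative

variable {𝕜 : Type*} [NontriviallyNormedField 𝕜]
  {E F G : Type*} [NormedAddCommGroup E] [NormedSpace 𝕜 E] [NormedAddCommGroup F]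
  [NormedSpace 𝕜 F] [NormedAddCommGroup G] [NormedSpace 𝕜 G]

theorem fderiv_fun_fderiv_apply {u : E → F} {x : E} (hu : DifferentiableAt 𝕜 (fderiv 𝕜 u) x)
    (v w : E) : fderiv 𝕜 (fun y => fderiv 𝕜 u y v) x w = fderiv 𝕜 (fderiv 𝕜 u) x w v := by
  rw [fderiv_clm_apply hu (differentiableAt_const v)]
  simp

theorem ContDiffAt.differentiableAt_fderiv {u : E → F} {x : E} (hu : ContDiffAt 𝕜 2 u x) :
    DifferentiableAt 𝕜 (fderiv 𝕜 u) x :=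
  (hu.fderiv_right (m := 1) (by norm_num)).differentiableAt one_ne_zero

theorem fderiv_fderiv_comp {g : F → G} {f : E → F} {x : E} (hg : ContDiffAt 𝕜 2 g (f x))
    (hf : ContDiffAt 𝕜 2 f x) (v w : E) :
    fderiv 𝕜 (fderiv 𝕜 (g ∘ f)) x v w =
      fderiv 𝕜 g (f x) (fderiv 𝕜 (fderiv 𝕜 f) x v w)
        + fderiv 𝕜 (fderiv 𝕜 g) (f x) (fderiv 𝕜 f x v) (fderiv 𝕜 f x w) := by
  have hchain : fderiv 𝕜 (g ∘ f) =ᶠ[𝓝 x] fun y => (fderiv 𝕜 g (f y)).comp (fderiv 𝕜 f y) := by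
    filter_upwards [hf.continuousAt.eventually (hg.eventually (by simp)), hf.eventually (by simp)]
      with y hgy hfy
    exact fderiv_comp y (hgy.differentiableAt two_ne_zero) (hfy.differentiableAt two_ne_zero)
  have hdg : HasFDerivAt (fun y => fderiv 𝕜 g (f y))
      ((fderiv 𝕜 (fderiv 𝕜 g) (f x)).comp (fderiv 𝕜 f x)) x :=
    hg.differentiableAt_fderiv.hasFDerivAt.comp x
      (hf.differentiableAt two_ne_zero).hasFDerivAt
  rw [hchain.fderiv_eq, (hdg.clm_comp hf.differentiableAt_fderiv.hasFDerivAt).fderiv]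
  simp [add_comm]

end SecondDerivative

theorem IsLocalMax.deriv_deriv_nonpos {g : ℝ → ℝ} {t : ℝ} (hmax : IsLocalMax g t)
    (hc : ContinuousAt g t) : deriv (deriv g) t ≤ 0 := by
  by_contra! hpos
  have hconst : g =ᶠ[𝓝 t] fun _ => g t :=
    ((isLocalMin_of_deriv_deriv_pos hpos hmax.deriv_eq_zero hc).and hmax).mono
      fun _ hs => le_antisymm hs.2 hs.1
  simp [hconst.deriv.deriv_eq] at hpos

theorem IsLocalMax.fderiv_fderiv_self_nonpos {E : Type*} [NormedAddCommGroup E]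
    [NormedSpace ℝ E] {u : E → ℝ} {x : E} (hmax : IsLocalMax u x) (hu : ContDiffAt ℝ 2 u x)
    (v : E) : fderiv ℝ (fderiv ℝ u) x v v ≤ 0 := by
  have hline : ∀ t : ℝ, HasDerivAt (fun s : ℝ => x + s • v) v t := fun t => by
    simpa using ((hasDerivAt_id t).smul_const v).const_add x
  have hcont : Tendsto (fun s : ℝ => x + s • v) (𝓝 0) (𝓝 x) := by
    simpa using (hline 0).continuousAt.tendsto
  have hderiv : deriv (fun s => u (x + s • v)) =ᶠ[𝓝 (0 : ℝ)] fun s => fderiv ℝ u (x + s • v) v := by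
    filter_upwards [hcont.eventually (hu.eventually (by simp))] with s hs
    exact ((hs.differentiableAt two_ne_zero).hasFDerivAt.comp_hasDerivAt s (hline s)).deriv
  have hsecond : HasDerivAt (fun s : ℝ => fderiv ℝ u (x + s • v) v)
      (fderiv ℝ (fderiv ℝ u) x v v) 0 := by
    simpa using (hu.differentiableAt_fderiv.hasFDerivAt.comp_hasDerivAt_of_eq 0 (hline 0)
      (by simp)).clm_apply (hasDerivAt_const 0 v)
  rw [← hsecond.deriv, ← hderiv.deriv_eq]
  refine IsLocalMax.deriv_deriv_nonpos ?_ ?_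
  · simpa [IsLocalMax, IsMaxFilter] using hcont.eventually hmax
  · exact hu.continuousAt.comp_of_eq (hline 0).continuousAt (by simp)

theorem laplacian_complexPlane_apply {F : Type*} [NormedAddCommGroup F] [NormedSpace ℝ F]
    (u : ℂ → F) (z : ℂ) :
    Δ u z = fderiv ℝ (fderiv ℝ u) z 1 1 + fderiv ℝ (fderiv ℝ u) z Complex.I Complex.I := by
  simp [laplacian_eq_iteratedFDeriv_complexPlane, iteratedFDeriv_two_apply]

theorem IsLocalMax.laplacian_nonpos {u : ℂ → ℝ} {z : ℂ} (hmax : IsLocalMax u z)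
    (hu : ContDiffAt ℝ 2 u z) : Δ u z ≤ 0 := by
  rw [laplacian_complexPlane_apply]
  linarith [hmax.fderiv_fderiv_self_nonpos hu 1, hmax.fderiv_fderiv_self_nonpos hu Complex.I]

theorem laplacian_re_sq (z : ℂ) : Δ (fun w : ℂ => w.re ^ 2) z = 2 := by
  have h : fderiv ℝ (fun w : ℂ => w.re ^ 2) = fun w => (2 * w.re) • Complex.reCLM := by
    ext w : 1
    simpa using ((Complex.reCLM.hasFDerivAt (x := w)).pow 2).fderiv
  have h2 : HasFDerivAt (fun w : ℂ => (2 * w.re) • Complex.reCLM)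
      (((2 : ℝ) • Complex.reCLM).smulRight Complex.reCLM) z := by
    simpa using ((Complex.reCLM.hasFDerivAt (x := z)).const_mul 2).smul_const Complex.reCLM
  rw [laplacian_complexPlane_apply, h, h2.fderiv]
  simp

theorem IsCompact.le_of_forall_frontier_le_of_laplacian_pos {K : Set ℂ} (hK : IsCompact K)
    {u : ℂ → ℝ} (hc : ContinuousOn u K) (hu : ∀ z ∈ interior K, ContDiffAt ℝ 2 u z)
    (hΔ : ∀ z ∈ interior K, 0 < Δ u z) {M : ℝ} (hM : ∀ z ∈ frontier K, u z ≤ M) :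
    ∀ z ∈ K, u z ≤ M := by
  intro z hz
  obtain ⟨m, hmK, hmax⟩ := hK.exists_isMaxOn ⟨z, hz⟩ hc
  have hm : m ∉ interior K := fun hm =>
    ((hmax.isLocalMax (mem_interior_iff_mem_nhds.1 hm)).laplacian_nonpos (hu m hm)).not_gt
      (hΔ m hm)
  exact (hmax hz).trans (hM m ⟨subset_closure hmK, hm⟩)

theorem IsCompact.le_of_forall_frontier_le_of_laplacian_nonneg {K : Set ℂ} (hK : IsCompact K)
    {u : ℂ → ℝ} (hc : ContinuousOn u K) (hu : ∀ z ∈ interior K, ContDiffAt ℝ 2 u z)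
    (hΔ : ∀ z ∈ interior K, 0 ≤ Δ u z) {M : ℝ} (hM : ∀ z ∈ frontier K, u z ≤ M) :
    ∀ z ∈ K, u z ≤ M := by
  have hsq : ContDiff ℝ 2 fun w : ℂ => w.re ^ 2 := Complex.reCLM.contDiff.pow 2
  obtain ⟨P, hP⟩ := (hK.image_of_continuousOn hsq.continuous.continuousOn).bddAbove
  have hP' : ∀ z ∈ K, z.re ^ 2 ≤ P := fun z hz => hP ⟨z, hz, rfl⟩
  intro z hz
  -- perturb by `δ re²`, whose Laplacian `2δ` is positive
  have hδ : ∀ δ > 0, u z ≤ M + δ * P := by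
    intro δ hδ
    have hsqδ : ContDiff ℝ 2 (δ • fun w : ℂ => w.re ^ 2) := hsq.const_smul δ
    have := hK.le_of_forall_frontier_le_of_laplacian_pos (u := u + δ • fun w => w.re ^ 2)
      (hc.add hsqδ.continuous.continuousOn) (fun w hw => (hu w hw).add hsqδ.contDiffAt)
      (fun w hw => by
        rw [(hu w hw).laplacian_add hsqδ.contDiffAt, laplacian_smul _ hsq.contDiffAt,
          laplacian_re_sq]
        simp only [smul_eq_mul]
        linarith [hΔ w hw])
      (M := M + δ * P) (fun w hw => add_le_add (hM w hw)
        (mul_le_mul_of_nonneg_left (hP' w (hK.isClosed.frontier_subset hw)) hδ.le)) z hz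
    simp only [Pi.add_apply, Pi.smul_apply, smul_eq_mul] at this
    linarith [mul_nonneg hδ.le (sq_nonneg z.re)]
  have hlim : Tendsto (fun δ : ℝ => M + δ * P) (𝓝[>] 0) (𝓝 M) := by
    have : Continuous fun δ : ℝ => M + δ * P := by fun_prop
    simpa using (this.tendsto 0).mono_left nhdsWithin_le_nhds
  exact ge_of_tendsto hlim (eventually_nhdsWithin_of_forall hδ)

theorem frontier_closedBall_diff_ball_subset {X : Type*} [PseudoMetricSpace X] (x : X)
    (r R : ℝ) : frontier (closedBall x R \ ball x r) ⊆ sphere x R ∪ sphere x r := by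
  rw [Set.sdiff_eq]
  refine (frontier_inter_subset _ _).trans ?_
  rw [frontier_compl]
  exact Set.union_subset_union (Set.inter_subset_left.trans frontier_closedBall_subset_sphere)
    (Set.inter_subset_right.trans frontier_ball_subset_sphere)

theorem le_of_mem_annulus_of_laplacian_nonneg {u : ℂ → ℝ} {z₀ : ℂ} {r R m M : ℝ} (hr : 0 < r)
    (hrR : r < R) (hu : ∀ z ∈ closedBall z₀ R \ ball z₀ r, ContDiffAt ℝ 2 u z)
    (hΔ : ∀ z ∈ closedBall z₀ R \ ball z₀ r, 0 ≤ Δ u z)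
    (hm : ∀ z ∈ sphere z₀ r, u z ≤ m) (hM : ∀ z ∈ sphere z₀ R, u z ≤ M) {z : ℂ}
    (hz : z ∈ closedBall z₀ R \ ball z₀ r) :
    u z ≤ m + (M - m) * (Real.log (dist z z₀) - Real.log r) / (Real.log R - Real.log r) := by
  set A := closedBall z₀ R \ ball z₀ r
  set L : ℂ → ℝ := fun w => Real.log ‖w - z₀‖
  set c := (M - m) / (Real.log R - Real.log r)
  have hcD : c * (Real.log R - Real.log r) = M - m :=
    div_mul_cancel₀ _ (sub_pos.2 (Real.log_lt_log hr hrR)).ne'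
  have hL : ∀ w ∈ A, HarmonicAt L w := fun w hw =>
    (analyticAt_id.sub analyticAt_const).harmonicAt_log_norm
      (by simpa [sub_eq_zero] using fun hw₀ : w = z₀ => hw.2 (hw₀ ▸ mem_ball_self hr))
  have hcL : ∀ w ∈ A, ContDiffAt ℝ 2 ((-c) • L) w := fun w hw => (hL w hw).1.const_smul (-c)
  -- `u - c L` is subharmonic on `A` and `c` is chosen so that it is `≤ m - c log r` on both circles
  have hv := ((isCompact_closedBall z₀ R).diff isOpen_ball)
    |>.le_of_forall_frontier_le_of_laplacian_nonneg (M := m - c * Real.log r) (u := u + (-c) • L)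
    (fun w hw => ((hu w hw).add (hcL w hw)).continuousAt.continuousWithinAt)
    (fun w hw => (hu w (interior_subset hw)).add (hcL w (interior_subset hw)))
    (fun w hw => by
      have hw := interior_subset hw
      rw [(hu w hw).laplacian_add (hcL w hw), laplacian_smul _ (hL w hw).1,
        (hL w hw).2.self_of_nhds]
      simpa using hΔ w hw)
    (fun w hw => by
      rcases frontier_closedBall_diff_ball_subset z₀ r R hw with hw | hw <;>
        simp only [Pi.add_apply, Pi.smul_apply, smul_eq_mul, L, ← dist_eq_norm, mem_sphere.1 hw]
      · linarith [hM w hw]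
      · linarith [hm w hw]) z hz
  simp only [Pi.add_apply, Pi.smul_apply, smul_eq_mul, L, ← dist_eq_norm] at hv
  rw [mul_div_right_comm]
  linarith

theorem le_of_bddAbove_of_laplacian_nonneg {u : ℂ → ℝ} (hu : ContDiff ℝ 2 u)
    (hΔ : ∀ z, 0 ≤ Δ u z) (hbdd : BddAbove (Set.range u)) (z₀ z₁ : ℂ) : u z₁ ≤ u z₀ := by
  obtain ⟨M, hM⟩ := hbdd
  rcases eq_or_ne z₁ z₀ with rfl | hne
  · rfl
  refine le_of_forall_pos_le_add fun ε hε => ?_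
  obtain ⟨r₀, hr₀, hball⟩ := Metric.eventually_nhds_iff.1 <|
    hu.continuous.continuousAt.eventually (eventually_le_nhds (lt_add_of_pos_right (u z₀) hε))
  set d := dist z₁ z₀
  set r := min (r₀ / 2) d
  have hr : 0 < r := lt_min (half_pos hr₀) (dist_pos.2 hne)
  have hm : ∀ z ∈ sphere z₀ r, u z ≤ u z₀ + ε := fun z hz =>
    hball ((mem_sphere.1 hz).trans_lt ((min_le_left _ _).trans_lt (half_lt_self hr₀)))
  have hlim : Tendsto (fun R => u z₀ + ε + (M - (u z₀ + ε)) * (Real.log d - Real.log r)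
      / (Real.log R - Real.log r)) atTop (𝓝 (u z₀ + ε)) := by
    have hlog : Tendsto (fun R => Real.log R - Real.log r) atTop atTop :=
      tendsto_atTop_add_const_right _ _ Real.tendsto_log_atTop
    simpa using tendsto_const_nhds.add (tendsto_const_nhds.div_atTop hlog)
  refine ge_of_tendsto hlim ((eventually_gt_atTop d).mono fun R hR => ?_)
  exact le_of_mem_annulus_of_laplacian_nonneg hr ((min_le_right _ _).trans_lt hR)
    (fun z _ => hu.contDiffAt) (fun z _ => hΔ z) hm (fun z _ => hM ⟨z, rfl⟩)
    ⟨mem_closedBall.2 hR.le, fun h => (min_le_right _ _).not_gt (mem_ball.1 h)⟩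

section Hess

variable {n : ℕ} {ρ : EuclideanSpace ℝ (Fin n) → ℝ} {x : EuclideanSpace ℝ (Fin n)}

theorem hess_smul_smul (c : ℝ) (v : EuclideanSpace ℝ (Fin n)) :
    Hess ρ x (c • v) (c • v) = c ^ 2 * Hess ρ x v v := by
  have h : (fun y => fderiv ℝ ρ y (c • v)) = c • fun y => fderiv ℝ ρ y v := by
    ext y; simp
  rw [Hess, h, fderiv_const_smul_field]
  simp only [FunLike.coe_smul, Pi.smul_apply, map_smul, smul_eq_mul, Hess]
  ring

theorem Is2PSH.hess_add_hess_nonneg {Ω : Set (EuclideanSpace ℝ (Fin n))} (hpsh : Is2PSH ρ Ω)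
    (hx : x ∈ Ω) {a b : EuclideanSpace ℝ (Fin n)} (hab : ⟪a, b⟫ = 0) (hnorm : ‖a‖ = ‖b‖) :
    0 ≤ Hess ρ x a a + Hess ρ x b b := by
  rcases eq_or_ne a 0 with rfl | ha
  · obtain rfl : b = 0 := norm_eq_zero.1 (by rw [← hnorm, norm_zero])
    simp [Hess]
  have hc : 0 < ‖a‖⁻¹ := inv_pos.2 (norm_pos_iff.2 ha)
  have hv : Orthonormal ℝ ![‖a‖⁻¹ • a, ‖a‖⁻¹ • b] := by
    rw [orthonormal_iff_ite]
    intro i j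
    fin_cases i <;> fin_cases j <;>
      simp [real_inner_smul_left, real_inner_smul_right, hab, real_inner_comm a b, norm_smul,
        ← hnorm, ha]
  have := hpsh x hx _ hv
  simp only [Fin.sum_univ_two, Matrix.cons_val_zero, Matrix.cons_val_one, hess_smul_smul,
    ← mul_add] at this
  exact (mul_nonneg_iff_of_pos_left (pow_pos hc 2)).1 this

end Hess

theorem laplacian_comp_apply {E F : Type*} [NormedAddCommGroup E] [NormedSpace ℝ E]
    [NormedAddCommGroup F] [NormedSpace ℝ F] {g : E → F} {f : ℂ → E} {z : ℂ}
    (hg : ContDiffAt ℝ 2 g (f z)) (hf : ContDiffAt ℝ 2 f z) :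
    Δ (g ∘ f) z = fderiv ℝ g (f z) (Δ f z)
      + (fderiv ℝ (fderiv ℝ g) (f z) (fderiv ℝ f z 1) (fderiv ℝ f z 1)
        + fderiv ℝ (fderiv ℝ g) (f z) (fderiv ℝ f z Complex.I) (fderiv ℝ f z Complex.I)) := by
  rw [laplacian_complexPlane_apply, laplacian_complexPlane_apply, fderiv_fderiv_comp hg hf,
    fderiv_fderiv_comp hg hf, map_add]
  abel

namespace ConformalHarmonic

variable {n : ℕ} {f : ℂ → EuclideanSpace ℝ (Fin n)}

theorem laplacian_eq_zero (hf : ConformalHarmonic f) (z : ℂ) : Δ f z = 0 := by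
  have hdf := hf.1.contDiffAt.differentiableAt_fderiv (x := z)
  rw [laplacian_complexPlane_apply, ← fderiv_fun_fderiv_apply hdf,
    ← fderiv_fun_fderiv_apply hdf]
  exact hf.2.2 z

theorem laplacian_comp_nonneg (hf : ConformalHarmonic f) {ρ : EuclideanSpace ℝ (Fin n) → ℝ}
    {Ω : Set (EuclideanSpace ℝ (Fin n))} (hpsh : Is2PSH ρ Ω) {z : ℂ} (hz : f z ∈ Ω)
    (hρ : ContDiffAt ℝ 2 ρ (f z)) : 0 ≤ Δ (ρ ∘ f) z := by
  have hdρ := hρ.differentiableAt_fderiv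
  rw [laplacian_comp_apply hρ hf.1.contDiffAt, hf.laplacian_eq_zero, map_zero, zero_add,
    ← fderiv_fun_fderiv_apply hdρ, ← fderiv_fun_fderiv_apply hdρ]
  exact hpsh.hess_add_hess_nonneg hz (hf.2.1 z).1 (hf.2.1 z).2

end ConformalHarmonic

/-- Let `Ω ⊆ ℝⁿ` be open and `ρ : Ω → ℝ` a `C²`
`2`-plurisubharmonic function which is bounded above on `Ω`. Then for every conformal
harmonic map `f : ℂ → ℝⁿ` with image in `Ω`, the composition `ρ ∘ f` is constant. -/
theorem bounded_2psh_comp_conformalHarmonic_constant {n : ℕ}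
    (Ω : Set (EuclideanSpace ℝ (Fin n))) (hΩ : IsOpen Ω)
    (ρ : EuclideanSpace ℝ (Fin n) → ℝ) (hρ : ContDiffOn ℝ 2 ρ Ω)
    (hpsh : Is2PSH ρ Ω) (hbd : ∃ C : ℝ, ∀ x ∈ Ω, ρ x ≤ C)
    (f : ℂ → EuclideanSpace ℝ (Fin n)) (hf : ConformalHarmonic f)
    (hrange : ∀ z : ℂ, f z ∈ Ω) :
    ∀ z w : ℂ, ρ (f z) = ρ (f w) := by
  have hρf : ∀ z, ContDiffAt ℝ 2 ρ (f z) := fun z => hρ.contDiffAt (hΩ.mem_nhds (hrange z))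
  have hu : ContDiff ℝ 2 (ρ ∘ f) :=
    contDiff_iff_contDiffAt.2 fun z => (hρf z).comp z hf.1.contDiffAt
  have hΔ : ∀ z, 0 ≤ Δ (ρ ∘ f) z := fun z =>
    hf.laplacian_comp_nonneg hpsh (hrange z) (hρf z)
  obtain ⟨C, hC⟩ := hbd
  have hbdd : BddAbove (Set.range (ρ ∘ f)) := ⟨C, by
    rintro _ ⟨z, rfl⟩
    exact hC (f z) (hrange z)⟩
  intro z w
  exact le_antisymm (le_of_bddAbove_of_laplacian_nonneg hu hΔ hbdd w z)
    (le_of_bddAbove_of_laplacian_nonneg hu hΔ hbdd z w)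
end

section
/- Let U ⊆ ℂ be an open connected set and let f : U → ℝ² = ℂ be a nonconstant conformal harmonic map. Then either f is holomorphic on U or the complex conjugate map z ↦ conj(f(z)) is holomorphic on U. -/
/-!
Write `∂f = f_x - i f_y` (twice the Wirtinger derivative `∂f/∂z`). For harmonic `f`, `∂f` and
`∂(conj ∘ f) = conj (f_x + i f_y)` are holomorphic, and their product
`|f_x|² - |f_y|² - 2i (f_x · f_y)` vanishes exactly by conformality. On a connected domain the
identity theorem forces one factor to vanish identically, and `∂g = 0` is the Cauchy–Riemann
system for `conj ∘ g`; so `conj ∘ f` or `conj ∘ conj ∘ f = f` is holomorphic.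
-/

open Complex ComplexConjugate InnerProductSpace

noncomputable def complexPartial (f : ℂ → ℂ) (z : ℂ) : ℂ :=
  fderiv ℝ f z 1 - I * fderiv ℝ f z I

section SecondDerivatives

variable {F : Type*} [NormedAddCommGroup F] [NormedSpace ℝ F] {f : ℂ → F} {z : ℂ}

theorem ContDiffAt.hasFDerivAt_fderiv_apply (hf : ContDiffAt ℝ 2 f z) (v : ℂ) :
    HasFDerivAt (fun w => fderiv ℝ f w v) ((fderiv ℝ (fderiv ℝ f) z).flip v) z := by
  have hf' : DifferentiableAt ℝ (fderiv ℝ f) z :=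
    (hf.fderiv_right (m := 1) (by norm_num)).differentiableAt one_ne_zero
  simpa using hf'.hasFDerivAt.clm_apply (hasFDerivAt_const v z)

theorem ContDiffAt.fderiv_fderiv_apply_eq_iteratedFDeriv (hf : ContDiffAt ℝ 2 f z) (v : ℂ) :
    fderiv ℝ (fun w => fderiv ℝ f w v) z v = iteratedFDeriv ℝ 2 f z ![v, v] := by
  simp [(hf.hasFDerivAt_fderiv_apply v).fderiv, iteratedFDeriv_two_apply]

theorem harmonicOnNhd_of_fderiv {U : Set ℂ} (hU : IsOpen U) (hf : ContDiffOn ℝ 2 f U)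
    (hΔ : ∀ z ∈ U, fderiv ℝ (fun w => fderiv ℝ f w 1) z 1
      + fderiv ℝ (fun w => fderiv ℝ f w I) z I = 0) :
    HarmonicOnNhd f U := by
  intro z hz
  refine ⟨hf.contDiffAt (hU.mem_nhds hz), ?_⟩
  filter_upwards [hU.mem_nhds hz] with w hw
  have hfw := hf.contDiffAt (hU.mem_nhds hw)
  simpa [laplacian_eq_iteratedFDeriv_complexPlane, ← hfw.fderiv_fderiv_apply_eq_iteratedFDeriv]
    using hΔ w hw

end SecondDerivatives

theorem InnerProductSpace.HarmonicAt.differentiableAt_complexPartial {f : ℂ → ℂ} {z : ℂ}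
    (hf : HarmonicAt f z) : DifferentiableAt ℂ (complexPartial f) z := by
  set D := fderiv ℝ (fderiv ℝ f) z
  have hD : HasFDerivAt (complexPartial f) (D.flip 1 - I • D.flip I) z :=
    (hf.1.hasFDerivAt_fderiv_apply 1).sub ((hf.1.hasFDerivAt_fderiv_apply I).const_mul I)
  have hsymm : D I 1 = D 1 I := hf.1.isSymmSndFDerivAt (by simp) I 1
  have hΔ : D 1 1 + D I I = 0 := by
    simpa [laplacian_eq_iteratedFDeriv_complexPlane, iteratedFDeriv_two_apply] using
      hf.2.eq_of_nhds
  refine differentiableAt_complex_iff_differentiableAt_real.2 ⟨hD.differentiableAt, ?_⟩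
  simp only [hD.fderiv, sub_apply, smul_apply, ContinuousLinearMap.flip_apply, smul_eq_mul]
  linear_combination hsymm - I * hΔ + D 1 I * I_sq

theorem InnerProductSpace.HarmonicOnNhd.analyticOnNhd_complexPartial {f : ℂ → ℂ} {U : Set ℂ}
    (hf : HarmonicOnNhd f U) (hU : IsOpen U) : AnalyticOnNhd ℂ (complexPartial f) U :=
  DifferentiableOn.analyticOnNhd
    (fun z hz => (hf z hz).differentiableAt_complexPartial.differentiableWithinAt) hU

theorem complexPartial_conj (f : ℂ → ℂ) (z : ℂ) :
    complexPartial (fun w => conj (f w)) z = conj (fderiv ℝ f z 1 + I * fderiv ℝ f z I) := by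
  rw [complexPartial, show (fun w => conj (f w)) = conjCLE ∘ f from rfl, conjCLE.comp_fderiv]
  simp only [ContinuousLinearMap.comp_apply, ContinuousLinearEquiv.coe_coe, conjCLE_apply, map_add,
    map_mul, conj_I]
  ring

theorem differentiableAt_conj_of_complexPartial_eq_zero {f : ℂ → ℂ} {z : ℂ}
    (hf : DifferentiableAt ℝ f z) (h : complexPartial f z = 0) :
    DifferentiableAt ℂ (fun w => conj (f w)) z := by
  rw [differentiableAt_complex_iff_differentiableAt_real]
  refine ⟨conjCLE.differentiableAt.comp z hf, ?_⟩
  rw [show (fun w => conj (f w)) = conjCLE ∘ f from rfl, conjCLE.comp_fderiv]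
  have h1 : fderiv ℝ f z 1 = I * fderiv ℝ f z I := by
    rw [complexPartial] at h
    linear_combination h
  simp only [ContinuousLinearMap.comp_apply, ContinuousLinearEquiv.coe_coe, conjCLE_apply, h1,
    map_mul, conj_I, smul_eq_mul]
  linear_combination conj (fderiv ℝ f z I) * I_sq

theorem mul_conj_eq_zero_of_conformal {p q : ℂ} (horth : p.re * q.re + p.im * q.im = 0)
    (hnorm : ‖p‖ = ‖q‖) : (p - I * q) * conj (p + I * q) = 0 := by
  have hsq : normSq p = normSq q := by
    rw [← Complex.sq_norm, ← Complex.sq_norm, hnorm]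
  rw [normSq_apply, normSq_apply] at hsq
  simp only [Complex.ext_iff, mul_re, mul_im, sub_re, sub_im, add_re, add_im, conj_re, conj_im,
    I_re, I_im, zero_re, zero_im]
  exact ⟨by linear_combination hsq, by linear_combination -2 * horth⟩

theorem conformalHarmonic_plane_holomorphic_or_antiholomorphic_general
    (U : Set ℂ) (hU : IsOpen U) (hUconn : IsConnected U)
    (f : ℂ → ℂ) (hf : ContDiffOn ℝ 2 f U)
    (hconf : ∀ z ∈ U,
        (fderiv ℝ f z 1).re * (fderiv ℝ f z Complex.I).re
          + (fderiv ℝ f z 1).im * (fderiv ℝ f z Complex.I).im = 0 ∧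
        ‖fderiv ℝ f z 1‖ = ‖fderiv ℝ f z Complex.I‖)
    (hharm : ∀ z ∈ U, fderiv ℝ (fun w => fderiv ℝ f w 1) z 1
        + fderiv ℝ (fun w => fderiv ℝ f w Complex.I) z Complex.I = 0) :
    DifferentiableOn ℂ f U ∨
      DifferentiableOn ℂ (fun z => starRingEnd ℂ (f z)) U := by
  have hH : HarmonicOnNhd f U := harmonicOnNhd_of_fderiv hU hf hharm
  have hH' : HarmonicOnNhd (fun z => conj (f z)) U := hH.comp_CLM conjCLE.toContinuousLinearMap
  have hprod : ∀ z ∈ U, complexPartial f z * complexPartial (fun z => conj (f z)) z = 0 :=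
    fun z hz => by
      rw [complexPartial_conj]
      exact mul_conj_eq_zero_of_conformal (hconf z hz).1 (hconf z hz).2
  rcases AnalyticOnNhd.eq_zero_or_eq_zero_of_mul_eq_zero (hH.analyticOnNhd_complexPartial hU)
    (hH'.analyticOnNhd_complexPartial hU) hprod hUconn.isPreconnected with h | h
  · exact Or.inr fun z hz => (differentiableAt_conj_of_complexPartial_eq_zero
      ((hH z hz).1.differentiableAt two_ne_zero) (h z hz)).differentiableWithinAt
  · refine Or.inl fun z hz => ?_
    simpa using (differentiableAt_conj_of_complexPartial_eq_zero
      ((hH' z hz).1.differentiableAt two_ne_zero) (h z hz)).differentiableWithinAt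

/-- Let `U ⊆ ℂ` be open and connected, and `f : U → ℝ² = ℂ` a
nonconstant conformal harmonic map: `f` is `C²` on `U` (as a map into `ℝ²`), with
`f_x · f_y = 0` and `|f_x| = |f_y|` at every point of `U` (the real Euclidean inner
product and norm on `ℝ² = ℂ`), and `f_xx + f_yy = 0` on `U`. Then either `f` is
holomorphic on `U`, or `z ↦ conj (f z)` is holomorphic on `U`. -/
theorem conformalHarmonic_plane_holomorphic_or_antiholomorphic
    (U : Set ℂ) (hU : IsOpen U) (hUconn : IsConnected U)
    (f : ℂ → ℂ) (hf : ContDiffOn ℝ 2 f U)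
    (hconf : ∀ z ∈ U,
        (fderiv ℝ f z 1).re * (fderiv ℝ f z Complex.I).re
          + (fderiv ℝ f z 1).im * (fderiv ℝ f z Complex.I).im = 0 ∧
        ‖fderiv ℝ f z 1‖ = ‖fderiv ℝ f z Complex.I‖)
    (hharm : ∀ z ∈ U, fderiv ℝ (fun w => fderiv ℝ f w 1) z 1
        + fderiv ℝ (fun w => fderiv ℝ f w Complex.I) z Complex.I = 0)
    (hnc : ∃ z ∈ U, ∃ w ∈ U, f z ≠ f w) :
    DifferentiableOn ℂ f U ∨
      DifferentiableOn ℂ (fun z => starRingEnd ℂ (f z)) U :=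
  conformalHarmonic_plane_holomorphic_or_antiholomorphic_general U hU hUconn f hf hconf hharm
end
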